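/- arXiv:2403.11915 — 5 statements merged into one kernel-verified Lean document; each statement's English description precedes it below -/
import Mathlib

section
/- The six functions {λᵢ(1 - 3λ_{i+1} - 3λ_{i+2}) : i=1,2,3} ∪ {6λ₂λ₃, 6λ₁λ₃, 6λ₁λ₂} form a basis of the space of polynomials of degree at most 2 on ℝ². -/
open MvPolynomial Submodule

noncomputable def P2space : Submodule ℝ ((Fin 2 → ℝ) → ℝ) :=
  Submodule.span ℝ
    {f | ∃ p : MvPolynomial (Fin 2) ℝ, p.totalDegree ≤ 2 ∧
      f = fun x => MvPolynomial.eval x p}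

lemma CX_deg (a : ℝ) (i : Fin 2) : (C a * X i : MvPolynomial (Fin 2) ℝ).totalDegree ≤ 1 := by
  rw [← smul_eq_C_mul]
  exact le_trans (totalDegree_smul_le _ _) (le_of_eq (totalDegree_X _))

lemma C_mul_deg (a : ℝ) (p : MvPolynomial (Fin 2) ℝ) :
    (C a * p).totalDegree ≤ p.totalDegree :=
  le_trans (totalDegree_mul _ _) (by simp [totalDegree_C])

lemma affine_poly (f : (Fin 2 → ℝ) →ᵃ[ℝ] ℝ) :
    ∃ p : MvPolynomial (Fin 2) ℝ, p.totalDegree ≤ 1 ∧ ∀ x, MvPolynomial.eval x p = f x := by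
  refine ⟨C (f.linear (Pi.single 0 1)) * X 0 + C (f.linear (Pi.single 1 1)) * X 1 + C (f 0),
    ?_, ?_⟩
  · exact le_trans (totalDegree_add _ _) (max_le (le_trans (totalDegree_add _ _)
      (max_le (CX_deg _ _) (CX_deg _ _))) (le_trans (totalDegree_C _).le zero_le_one))
  · intro x
    have hx : x = x 0 • (Pi.single 0 (1:ℝ) : Fin 2 → ℝ) + x 1 • (Pi.single 1 (1:ℝ) : Fin 2 → ℝ) := by
      funext j; fin_cases j <;> simp
    have hfx : f x = f.linear x + f 0 := by
      conv_lhs => rw [show x = x +ᵥ (0 : Fin 2 → ℝ) by simp, f.map_vadd]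
      simp [vadd_eq_add]
    rw [hfx]
    conv_rhs => rw [hx]
    simp [map_add, map_smul, mul_comm]

lemma affine_mid (f : (Fin 2 → ℝ) →ᵃ[ℝ] ℝ) (x y : Fin 2 → ℝ) :
    f (midpoint ℝ x y) = (f x + f y)/2 := by
  rw [f.map_midpoint, midpoint_eq_smul_add, smul_eq_mul, invOf_eq_inv]; ring

theorem AF3_basis_of_P2
    (v : Fin 3 → (Fin 2 → ℝ)) (lam : Fin 3 → ((Fin 2 → ℝ) →ᵃ[ℝ] ℝ))
    (hv : AffineIndependent ℝ v)
    (hdelta : ∀ i j, lam i (v j) = if i = j then 1 else 0)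
    (hsum : ∀ x, lam 0 x + lam 1 x + lam 2 x = 1) :
    let b : Fin 6 → ((Fin 2 → ℝ) → ℝ) :=
      ![fun x => lam 0 x * (1 - 3 * lam 1 x - 3 * lam 2 x),
        fun x => lam 1 x * (1 - 3 * lam 2 x - 3 * lam 0 x),
        fun x => lam 2 x * (1 - 3 * lam 0 x - 3 * lam 1 x),
        fun x => 6 * lam 1 x * lam 2 x,
        fun x => 6 * lam 0 x * lam 2 x,
        fun x => 6 * lam 0 x * lam 1 x]
    LinearIndependent ℝ b ∧ Submodule.span ℝ (Set.range b) = P2space := by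
  intro b
  -- linear independence
  have hli : LinearIndependent ℝ b := by
    rw [Fintype.linearIndependent_iff]
    intro g hg
    have hval : ∀ p : Fin 2 → ℝ, g 0 * (lam 0 p * (1 - 3 * lam 1 p - 3 * lam 2 p))
        + g 1 * (lam 1 p * (1 - 3 * lam 2 p - 3 * lam 0 p))
        + g 2 * (lam 2 p * (1 - 3 * lam 0 p - 3 * lam 1 p))
        + g 3 * (6 * lam 1 p * lam 2 p)
        + g 4 * (6 * lam 0 p * lam 2 p)
        + g 5 * (6 * lam 0 p * lam 1 p) = 0 := by
      intro p
      have := congrFun hg p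
      simpa [b, Fin.sum_univ_six, Finset.sum_apply, Pi.smul_apply, smul_eq_mul,
        Matrix.cons_val_zero, Matrix.cons_val_one, Matrix.head_cons] using this
    have e0 := hval (v 0)
    have e1 := hval (v 1)
    have e2 := hval (v 2)
    have e3 := hval (midpoint ℝ (v 1) (v 2))
    have e4 := hval (midpoint ℝ (v 0) (v 2))
    have e5 := hval (midpoint ℝ (v 0) (v 1))
    simp only [affine_mid, hdelta, Fin.ext_iff] at e0 e1 e2 e3 e4 e5
    norm_num at e0 e1 e2 e3 e4 e5
    intro i
    fin_cases i
    exacts [e0, e1, e2, by show g 3 = 0; linarith, by show g 4 = 0; linarith,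
      by show g 5 = 0; linarith]
  refine ⟨hli, ?_⟩
  obtain ⟨q0, hd0, he0⟩ := affine_poly (lam 0)
  obtain ⟨q1, hd1, he1⟩ := affine_poly (lam 1)
  obtain ⟨q2, hd2, he2⟩ := affine_poly (lam 2)
  -- span b ≤ P2space
  have hle1 : Submodule.span ℝ (Set.range b) ≤ P2space := by
    rw [Submodule.span_le]
    rintro f ⟨i, rfl⟩
    apply Submodule.subset_span
    have deg1 : ∀ r s : MvPolynomial (Fin 2) ℝ, r.totalDegree ≤ 1 → s.totalDegree ≤ 1 →
        (1 - C 3 * r - C 3 * s).totalDegree ≤ 1 := by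
      intro r s hr hs
      refine le_trans (totalDegree_sub _ _) (max_le (le_trans (totalDegree_sub _ _)
        (max_le (by simp [totalDegree_one]) ((C_mul_deg _ _).trans hr)))
        ((C_mul_deg _ _).trans hs))
    fin_cases i
    · exact ⟨q0 * (1 - C 3 * q1 - C 3 * q2),
        le_trans (totalDegree_mul _ _) (by have := deg1 q1 q2 hd1 hd2; omega),
        by funext x
           show lam 0 x * (1 - 3 * lam 1 x - 3 * lam 2 x) = _
           simp only [map_mul, map_sub, map_add, map_one, eval_C, he0, he1, he2]⟩
    · exact ⟨q1 * (1 - C 3 * q2 - C 3 * q0),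
        le_trans (totalDegree_mul _ _) (by have := deg1 q2 q0 hd2 hd0; omega),
        by funext x
           show lam 1 x * (1 - 3 * lam 2 x - 3 * lam 0 x) = _
           simp only [map_mul, map_sub, map_add, map_one, eval_C, he0, he1, he2]⟩
    · exact ⟨q2 * (1 - C 3 * q0 - C 3 * q1),
        le_trans (totalDegree_mul _ _) (by have := deg1 q0 q1 hd0 hd1; omega),
        by funext x
           show lam 2 x * (1 - 3 * lam 0 x - 3 * lam 1 x) = _
           simp only [map_mul, map_sub, map_add, map_one, eval_C, he0, he1, he2]⟩
    · exact ⟨C 6 * q1 * q2,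
        le_trans (totalDegree_mul _ _)
          (by have := (C_mul_deg 6 q1).trans hd1; omega),
        by funext x
           show 6 * lam 1 x * lam 2 x = _
           simp only [map_mul, eval_C, he1, he2]⟩
    · exact ⟨C 6 * q0 * q2,
        le_trans (totalDegree_mul _ _)
          (by have := (C_mul_deg 6 q0).trans hd0; omega),
        by funext x
           show 6 * lam 0 x * lam 2 x = _
           simp only [map_mul, eval_C, he0, he2]⟩
    · exact ⟨C 6 * q0 * q1,
        le_trans (totalDegree_mul _ _)
          (by have := (C_mul_deg 6 q0).trans hd0; omega),
        by funext x
           show 6 * lam 0 x * lam 1 x = _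
           simp only [map_mul, eval_C, he0, he1]⟩
  -- P2space ≤ span of six monomial functions
  set m : Fin 6 → ((Fin 2 → ℝ) → ℝ) :=
    ![fun _ => 1, fun x => x 0, fun x => x 1,
      fun x => x 0 ^ 2, fun x => x 0 * x 1, fun x => x 1 ^ 2] with hm
  have hle2 : P2space ≤ Submodule.span ℝ (Set.range m) := by
    rw [P2space, Submodule.span_le]
    rintro f ⟨p, hd, rfl⟩
    have hrw : (fun x => MvPolynomial.eval x p)
        = ∑ s ∈ p.support, p.coeff s • (fun x : Fin 2 → ℝ => x 0 ^ s 0 * x 1 ^ s 1) := by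
      funext x
      rw [Finset.sum_apply, MvPolynomial.eval_eq']
      refine Finset.sum_congr rfl fun s _ => ?_
      simp [Fin.prod_univ_two]
    rw [SetLike.mem_coe, hrw]
    refine Submodule.sum_mem _ fun s hs => Submodule.smul_mem _ _ ?_
    have hdeg : s 0 + s 1 ≤ 2 := by
      have h := MvPolynomial.le_totalDegree hs
      have h2 : s.sum (fun _ e => e) = s 0 + s 1 := by
        rw [Finsupp.sum_fintype _ _ (fun _ => rfl), Fin.sum_univ_two]
      omega
    have hcase : (s 0 = 0 ∧ s 1 = 0) ∨ (s 0 = 1 ∧ s 1 = 0) ∨ (s 0 = 0 ∧ s 1 = 1)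
        ∨ (s 0 = 2 ∧ s 1 = 0) ∨ (s 0 = 1 ∧ s 1 = 1) ∨ (s 0 = 0 ∧ s 1 = 2) := by omega
    apply Submodule.subset_span
    rcases hcase with ⟨h0, h1⟩|⟨h0, h1⟩|⟨h0, h1⟩|⟨h0, h1⟩|⟨h0, h1⟩|⟨h0, h1⟩ <;>
      rw [h0, h1]
    · exact ⟨0, by funext x; show (1:ℝ) = _; norm_num⟩
    · exact ⟨1, by funext x; show x 0 = _; norm_num⟩
    · exact ⟨2, by funext x; show x 1 = _; norm_num⟩
    · exact ⟨3, by funext x; show x 0 ^ 2 = _; norm_num⟩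
    · exact ⟨4, by funext x; show x 0 * x 1 = _; norm_num⟩
    · exact ⟨5, by funext x; show x 1 ^ 2 = _; norm_num⟩
  have hfinm : FiniteDimensional ℝ (Submodule.span ℝ (Set.range m)) :=
    FiniteDimensional.span_of_finite ℝ (Set.finite_range m)
  have hfinP : FiniteDimensional ℝ P2space := Submodule.finiteDimensional_of_le hle2
  have hcard : Module.finrank ℝ (Submodule.span ℝ (Set.range b)) = 6 := by
    rw [finrank_span_eq_card hli]; simp
  have hP6 : Module.finrank ℝ P2space ≤ 6 :=
    le_trans (Submodule.finrank_mono hle2) (finrank_range_le_card m)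
  exact Submodule.eq_of_le_of_finrank_le hle1 (by omega)
end

section
/- If p is a polynomial of degree at most 2 on ℝ² whose average over each of the three edges of a nondegenerate triangle T vanishes and which vanishes at each of the three vertices of T, then p = 0. -/
/-!
Restricted to a line, `p` is a polynomial of degree at most 2 in the line parameter. On the line
of an edge this restriction vanishes at both vertices and has mean zero over the edge; since
`c t (t - 1)` has mean `-c / 6`, it vanishes identically, so `p` vanishes on the three edge lines.
Every other point lies on a line meeting the three edge lines in three distinct points; `p`
vanishes there, hence on that whole line.
-/

open MeasureTheory Polynomial Set AffineMap

def IsPolynomialOnLines {𝕜 E : Type*} [Field 𝕜] [AddCommGroup E] [Module 𝕜 E]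
    (n : ℕ) (f : E → 𝕜) : Prop :=
  ∀ x y : E, ∃ r : 𝕜[X], r.natDegree ≤ n ∧ ∀ u, r.eval u = f (lineMap x y u)

theorem MvPolynomial.natDegree_aeval_le_totalDegree {R σ : Type*} [CommRing R]
    (p : MvPolynomial σ R) {g : σ → R[X]} (hg : ∀ i, (g i).natDegree ≤ 1) :
    (aeval g p).natDegree ≤ p.totalDegree := by
  conv_lhs => rw [p.as_sum, map_sum]
  refine natDegree_sum_le_of_forall_le _ _ fun d hd => ?_
  rw [aeval_monomial, ← Polynomial.C_eq_algebraMap]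
  calc (Polynomial.C (p.coeff d) * d.prod fun i k => g i ^ k).natDegree
      ≤ ∑ i ∈ d.support, (g i ^ d i).natDegree :=
        (natDegree_C_mul_le _ _).trans (natDegree_prod_le _ _)
    _ ≤ ∑ i ∈ d.support, d i := Finset.sum_le_sum fun i _ =>
        natDegree_pow_le.trans (by simpa using Nat.mul_le_mul_left (d i) (hg i))
    _ ≤ p.totalDegree := le_totalDegree hd

theorem MvPolynomial.isPolynomialOnLines_eval {𝕜 σ : Type*} [Field 𝕜]
    (p : MvPolynomial σ 𝕜) : IsPolynomialOnLines p.totalDegree fun x => eval x p := by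
  intro x y
  refine ⟨aeval (fun i => Polynomial.C (y i - x i) * Polynomial.X + Polynomial.C (x i)) p,
    natDegree_aeval_le_totalDegree p fun i => natDegree_linear_le, fun u => ?_⟩
  rw [← Polynomial.coe_aeval_eq_eval, ← AlgHom.comp_apply, comp_aeval]
  simp only [Polynomial.aeval_add, Polynomial.aeval_mul, Polynomial.aeval_C, Polynomial.aeval_X,
    MvPolynomial.aeval_eq_eval, lineMap_apply_module']
  congr 2
  funext i
  simp [mul_comm]

namespace IsPolynomialOnLines

variable {𝕜 E : Type*} [Field 𝕜] [AddCommGroup E] [Module 𝕜 E] {m n : ℕ} {f : E → 𝕜}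

theorem mono (hf : IsPolynomialOnLines m f) (hmn : m ≤ n) : IsPolynomialOnLines n f :=
  fun x y => (hf x y).imp fun _ hr => ⟨hr.1.trans hmn, hr.2⟩

theorem apply_lineMap_eq_zero_of_card_lt (hf : IsPolynomialOnLines n f) {x y : E} {S : Finset 𝕜}
    (hS : n < S.card) (hzero : ∀ u ∈ S, f (lineMap x y u) = 0) (u : 𝕜) :
    f (lineMap x y u) = 0 := by
  obtain ⟨r, hdeg, hr⟩ := hf x y
  have : r = 0 := eq_zero_of_natDegree_lt_card_of_eval_eq_zero' r S
    (fun u hu => (hr u).trans (hzero u hu)) (hdeg.trans_lt hS)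
  rw [← hr, this, eval_zero]

end IsPolynomialOnLines

theorem Polynomial.eq_zero_of_natDegree_le_two_of_integral_eq_zero {r : ℝ[X]}
    (hr : r.natDegree ≤ 2) (h₀ : r.eval 0 = 0) (h₁ : r.eval 1 = 0)
    (hint : ∫ t in (0 : ℝ)..1, r.eval t = 0) : r = 0 := by
  have heval : ∀ t : ℝ, r.eval t = r.coeff 0 + r.coeff 1 * t + r.coeff 2 * t ^ 2 := fun t => by
    simp [eval_eq_sum_range' (show r.natDegree < 3 by omega), Finset.sum_range_succ]
  have hint' : r.coeff 0 + r.coeff 1 / 2 + r.coeff 2 / 3 = 0 := by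
    rw [← hint, intervalIntegral.integral_congr fun t _ => heval t,
      intervalIntegral.integral_add, intervalIntegral.integral_add,
      intervalIntegral.integral_const_mul, intervalIntegral.integral_const_mul]
    · norm_num [integral_pow]; ring
    all_goals exact Continuous.intervalIntegrable (by fun_prop) _ _
  rw [heval] at h₀ h₁
  have hc₀ : r.coeff 0 = 0 := by linarith
  have hc₂ : r.coeff 2 = 0 := by linarith
  have hc₁ : r.coeff 1 = 0 := by linarith
  exact Polynomial.funext fun t => by simp [heval, hc₀, hc₁, hc₂]

theorem IsPolynomialOnLines.eqOn_zero_line_of_integral_eq_zero {E : Type*} [AddCommGroup E]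
    [Module ℝ E] {f : E → ℝ} (hf : IsPolynomialOnLines 2 f) {x y : E} (hx : f x = 0)
    (hy : f y = 0) (hint : ∫ t in (0 : ℝ)..1, f (lineMap x y t) = 0) :
    EqOn f 0 line[ℝ, x, y] := by
  obtain ⟨r, hdeg, hr⟩ := hf x y
  have hr₀ : r = 0 := eq_zero_of_natDegree_le_two_of_integral_eq_zero hdeg
    (by simpa [hr] using hx) (by simpa [hr] using hy) (by simpa [hr] using hint)
  intro z hz
  obtain ⟨u, rfl⟩ := mem_affineSpan_pair_iff_exists_lineMap_eq.mp hz
  simp [← hr, hr₀]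

section

variable {𝕜 E : Type*} [Field 𝕜] [AddCommGroup E] [Module 𝕜 E]

theorem exists_eq_add_smul_sub_of_mem_affineSpan_range {v : Fin 3 → E} {x : E}
    (hx : x ∈ affineSpan 𝕜 (range v)) :
    ∃ s t : 𝕜, x = v 0 + s • (v 1 - v 0) + t • (v 2 - v 0) := by
  obtain ⟨w, hw, rfl⟩ := eq_affineCombination_of_mem_affineSpan_of_fintype hx
  refine ⟨w 1, w 2, ?_⟩
  rw [Finset.affineCombination_eq_linear_combination _ _ _ hw, Fin.sum_univ_three]
  rw [Fin.sum_univ_three] at hw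
  rw [show w 0 = 1 - w 1 - w 2 by linear_combination hw]
  module

/-- In affine coordinates `(σ, τ)` the line through `(s, t)` and `(k, 0)` is
`u ↦ (k + u (s - k), u t)`; it meets `σ = 0` at `u₁` and `σ + τ = 1` at `u₂`. -/
theorem exists_transversal_params [Infinite 𝕜] {s : 𝕜} (t : 𝕜) (hs : s ≠ 0) :
    ∃ k u₁ u₂ : 𝕜, u₁ ≠ 0 ∧ u₂ ≠ 0 ∧ u₁ ≠ u₂ ∧
      k + u₁ * (s - k) = 0 ∧ k + u₂ * (s - k) + u₂ * t = 1 := by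
  classical
  obtain ⟨k, hk⟩ := Infinite.exists_notMem_finset ({0, 1, s, s + t, s / (1 - t)} : Finset 𝕜)
  simp only [Finset.mem_insert, Finset.mem_singleton, not_or] at hk
  obtain ⟨hk₀, hk₁, hks, hkst, hkq⟩ := hk
  have hks' : k - s ≠ 0 := sub_ne_zero.2 hks
  have hkst' : s + t - k ≠ 0 := sub_ne_zero.2 (Ne.symm hkst)
  refine ⟨k, k / (k - s), (1 - k) / (s + t - k), div_ne_zero hk₀ hks',
    div_ne_zero (sub_ne_zero.2 (Ne.symm hk₁)) hkst', ?_,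
    by field_simp; ring, by field_simp; ring⟩
  rw [Ne, div_eq_div_iff hks' hkst']
  intro h
  rcases eq_or_ne t 1 with rfl | ht₁
  · exact hs (by linear_combination h)
  · exact hkq (by rw [eq_div_iff (sub_ne_zero.2 (Ne.symm ht₁))]; linear_combination -h)

theorem IsPolynomialOnLines.apply_eq_zero_of_eqOn_zero_lines [Infinite 𝕜] {f : E → 𝕜}
    (hf : IsPolynomialOnLines 2 f) {a b c : E} (hbc : EqOn f 0 line[𝕜, b, c])
    (hca : EqOn f 0 line[𝕜, c, a]) (hab : EqOn f 0 line[𝕜, a, b]) (s t : 𝕜) :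
    f (a + s • (b - a) + t • (c - a)) = 0 := by
  classical
  rcases eq_or_ne s 0 with rfl | hs
  · apply hca
    rw [SetLike.mem_coe, zero_smul, add_zero, add_comm]
    exact smul_vsub_rev_vadd_mem_affineSpan_pair t c a
  obtain ⟨k, u₁, u₂, hu₁, hu₂, hu₁₂, h₁, h₂⟩ := exists_transversal_params t hs
  set x := a + s • (b - a) + t • (c - a)
  have hline : ∀ u : 𝕜, lineMap (a + k • (b - a)) x u
      = a + (k + u * (s - k)) • (b - a) + (u * t) • (c - a) := fun u => by
    simp only [x, lineMap_apply_module']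
    module
  have hzero₀ : f (lineMap (a + k • (b - a)) x (0 : 𝕜)) = 0 := by
    apply hab
    rw [SetLike.mem_coe, lineMap_apply_zero, add_comm]
    exact smul_vsub_vadd_mem_affineSpan_pair k a b
  have hzero₁ : f (lineMap (a + k • (b - a)) x u₁) = 0 := by
    apply hca
    rw [SetLike.mem_coe, hline, h₁]
    convert smul_vsub_rev_vadd_mem_affineSpan_pair (u₁ * t) c a using 1
    simp only [vsub_eq_sub, vadd_eq_add]
    module
  have hzero₂ : f (lineMap (a + k • (b - a)) x u₂) = 0 := by
    apply hbc
    rw [SetLike.mem_coe, hline]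
    convert smul_vsub_vadd_mem_affineSpan_pair (u₂ * t) b c using 1
    simp only [vsub_eq_sub, vadd_eq_add]
    linear_combination (norm := module) h₂ • (b - a)
  have hcard : 2 < ({0, u₁, u₂} : Finset 𝕜).card := by
    rw [Finset.card_eq_three.mpr ⟨0, u₁, u₂, hu₁.symm, hu₂.symm, hu₁₂, rfl⟩]
    norm_num
  simpa using hf.apply_lineMap_eq_zero_of_card_lt hcard
    (by simpa only [Finset.forall_mem_insert, Finset.mem_singleton, forall_eq]
      using ⟨hzero₀, hzero₁, hzero₂⟩) 1

theorem IsPolynomialOnLines.eqOn_zero_affineSpan [Infinite 𝕜] {f : E → 𝕜}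
    (hf : IsPolynomialOnLines 2 f) {v : Fin 3 → E}
    (hedge : ∀ j : Fin 3, EqOn f 0 line[𝕜, v (j + 1), v (j + 2)]) :
    EqOn f 0 (affineSpan 𝕜 (range v)) := by
  intro x hx
  obtain ⟨s, t, rfl⟩ := exists_eq_add_smul_sub_of_mem_affineSpan_range hx
  exact hf.apply_eq_zero_of_eqOn_zero_lines (hedge 0) (hedge 1) (hedge 2) s t

end

theorem AF3_unisolvence
    (v : Fin 3 → (Fin 2 → ℝ)) (hv : AffineIndependent ℝ v)
    (p : MvPolynomial (Fin 2) ℝ) (hp : p.totalDegree ≤ 2)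
    (hedge : ∀ j : Fin 3,
      (∫ t in (0:ℝ)..1,
        MvPolynomial.eval (t • v (j + 1) + (1 - t) • v (j + 2)) p) = 0)
    (hvert : ∀ j : Fin 3, MvPolynomial.eval (v j) p = 0) :
    p = 0 := by
  have hf : IsPolynomialOnLines 2 fun x => MvPolynomial.eval x p :=
    p.isPolynomialOnLines_eval.mono hp
  have hline (j : Fin 3) :
      EqOn (fun x => MvPolynomial.eval x p) 0 line[ℝ, v (j + 1), v (j + 2)] := by
    rw [Set.pair_comm]
    refine hf.eqOn_zero_line_of_integral_eq_zero (hvert _) (hvert _) ?_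
    simpa only [lineMap_apply_module, add_comm] using hedge j
  have hspan : affineSpan ℝ (range v) = ⊤ :=
    hv.affineSpan_eq_top_iff_card_eq_finrank_add_one.mpr (by simp)
  refine MvPolynomial.funext fun x => ?_
  simpa using hf.eqOn_zero_affineSpan hline (hspan ▸ AffineSubspace.mem_top ℝ _ x)
end

section
/- Let F₁, F₂, F₃ be linear functionals on C(T) and let N be the 3×3 matrix with entries Nⱼᵢ = Fⱼ(φᵢ), where φᵢ = λᵢ(1 - 3λ_{i+1} - 3λ_{i+2}). If N is nonsingular, then the only polynomial p of degree at most 2 satisfying both ∫₀¹ p(t v_{j+1} + (1-t) v_{j+2}) dt = 0 and Fⱼ(p) = 0 for j = 1,2,3 is p = 0. -/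
/-!
Every quadratic polynomial on the plane is a quadratic form `μ ⬝ᵥ c *ᵥ μ` in the barycentric
coordinates `μ = (λ₁, λ₂, λ₃)`: the coordinate functions and the constant `1 = ∑ λᵢ` are linear
combinations of the `λᵢ`, so every monomial of degree at most 2 is a combination of products
`λᵢ λⱼ`. On the edge `t vₐ + (1 - t) v_b` the form restricts to
`t² cₐₐ + (1 - t)² c_bb + t (1 - t) (c_ab + c_ba)`, whose integral over `[0, 1]` vanishes exactly
when `c_ab + c_ba = -2 (cₐₐ + c_bb)`. With these relations and `∑ λᵢ = 1` the form collapses to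
`∑ cᵢᵢ φᵢ`, so the conditions `Fⱼ(p) = 0` say that `N` kills the vector of vertex values `cᵢᵢ`.
-/

open MeasureTheory

noncomputable def phiAF (lam : Fin 3 → ((Fin 2 → ℝ) →ᵃ[ℝ] ℝ)) (i : Fin 3)
    (x : Fin 2 → ℝ) : ℝ :=
  lam i x * (1 - 3 * lam (i + 1) x - 3 * lam (i + 2) x)

open Set Submodule Matrix

theorem MvPolynomial.aeval_mem_pow_of_totalDegree_le {R A σ : Type*} [CommSemiring R]
    [CommSemiring A] [Algebra R A] {L : Submodule R A} (h1 : (1 : A) ∈ L) {x : σ → A}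
    (hx : ∀ i, x i ∈ L) {p : MvPolynomial σ R} {n : ℕ} (hp : p.totalDegree ≤ n) :
    aeval x p ∈ L ^ n := by
  classical
  have hprod : ∀ (d : σ →₀ ℕ) (s : Finset σ), ∏ i ∈ s, x i ^ d i ∈ L ^ ∑ i ∈ s, d i := by
    intro d s
    induction s using Finset.induction_on with
    | empty => exact one_le.mp le_rfl
    | insert i s hi ih =>
      rw [Finset.prod_insert hi, Finset.sum_insert hi, pow_add]
      exact mul_mem_mul (pow_mem_pow _ (hx i) _) ih
  rw [p.as_sum, map_sum]
  refine sum_mem fun d hd => ?_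
  rw [aeval_monomial, Algebra.algebraMap_eq_smul_one, smul_mul_assoc, one_mul]
  exact smul_mem _ _ (pow_le_pow_right' (one_le.mpr h1) ((le_totalDegree hd).trans hp)
    (hprod d d.support))

theorem Matrix.single_add_single_dotProduct_mulVec {ι R : Type*} [Fintype ι] [DecidableEq ι]
    [CommRing R] (c : Matrix ι ι R) (a b : ι) (s t : R) :
    (Pi.single a s + Pi.single b t) ⬝ᵥ c *ᵥ (Pi.single a s + Pi.single b t) =
      s ^ 2 * c a a + t ^ 2 * c b b + s * t * (c a b + c b a) := by
  simp only [mulVec_add, mulVec_single, op_smul_eq_smul, dotProduct_add, dotProduct_smul,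
    add_dotProduct, single_dotProduct, col_apply, smul_eq_mul]
  ring

theorem Matrix.dotProduct_mulVec_eq_sum_diag_mul_phi {R : Type*} [CommRing R]
    (c : Matrix (Fin 3) (Fin 3) R)
    (hc : ∀ j, c (j + 1) (j + 2) + c (j + 2) (j + 1) = -2 * (c (j + 1) (j + 1) + c (j + 2) (j + 2)))
    (μ : Fin 3 → R) (hμ : ∑ i, μ i = 1) :
    μ ⬝ᵥ c *ᵥ μ = ∑ i, c i i * (μ i * (1 - 3 * μ (i + 1) - 3 * μ (i + 2))) := by
  have h0 := hc 0
  have h1 := hc 1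
  have h2 := hc 2
  simp only [dotProduct, mulVec, Fin.sum_univ_three] at hμ ⊢
  simp only [Fin.isValue, zero_add, show (1 + 1 : Fin 3) = 2 from rfl,
    show (1 + 2 : Fin 3) = 0 from rfl, show (2 + 1 : Fin 3) = 0 from rfl,
    show (2 + 2 : Fin 3) = 1 from rfl] at h0 h1 h2 ⊢
  linear_combination (μ 1 * μ 2) * h0 + (μ 2 * μ 0) * h1 + (μ 0 * μ 1) * h2 +
    (c 0 0 * μ 0 + c 1 1 * μ 1 + c 2 2 * μ 2) * hμ

theorem intervalIntegral.integral_quadratic_bernstein (A B C : ℝ) :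
    ∫ t in (0 : ℝ)..1, (t ^ 2 * A + (1 - t) ^ 2 * B + t * (1 - t) * C) = A / 3 + B / 3 + C / 6 := by
  have h : ∀ t : ℝ, t ^ 2 * A + (1 - t) ^ 2 * B + t * (1 - t) * C =
      B + (C - 2 * B) * t + (A + B - C) * t ^ 2 := fun t => by ring
  simp only [h]
  rw [integral_add, integral_add, integral_const, integral_const_mul, integral_const_mul,
    integral_id, integral_pow]
  · ring
  all_goals exact (by fun_prop : Continuous _).intervalIntegrable _ _

namespace AffineBasis

variable {ι k V P : Type*} [CommRing k] [AddCommGroup V] [Module k V] [AddTorsor V P]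

theorem eq_coord_of_apply_eq_ite [DecidableEq ι] (b : AffineBasis ι k P) {f : P →ᵃ[k] k}
    {i : ι} (hf : ∀ j, f (b j) = if i = j then 1 else 0) : f = b.coord i :=
  AffineMap.ext_on b.tot (by rintro _ ⟨j, rfl⟩; rw [hf, b.coord_apply])

theorem coe_mem_span_coord [Fintype ι] (b : AffineBasis ι k P) (f : P →ᵃ[k] k) :
    ⇑f ∈ span k (range fun i => ⇑(b.coord i)) := by
  refine mem_span_range_iff_exists_fun k |>.mpr ⟨fun i => f (b i), funext fun x => ?_⟩
  have hw := b.sum_coord_apply_eq_one x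
  calc (∑ i, f (b i) • ⇑(b.coord i)) x
      = Finset.univ.affineCombination k (f ∘ b) (fun i => b.coord i x) := by
        rw [Finset.affineCombination_eq_linear_combination _ _ _ hw]
        simp [mul_comm]
    _ = f x := by rw [← Finset.map_affineCombination _ _ _ hw, b.affineCombination_coord_eq_self]

theorem exists_eval_eq_coords_dotProduct_mulVec {σ : Type*} [Fintype ι]
    (b : AffineBasis ι k (σ → k)) {p : MvPolynomial σ k} (hp : p.totalDegree ≤ 2) :
    ∃ c : Matrix ι ι k, ∀ x, MvPolynomial.eval x p = b.coords x ⬝ᵥ c *ᵥ b.coords x := by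
  set L := span k (range fun i => ⇑(b.coord i))
  have h1 : (1 : (σ → k) → k) ∈ L := b.coe_mem_span_coord (AffineMap.const k (σ → k) (1 : k))
  have hproj : ∀ s, (fun x : σ → k => x s) ∈ L :=
    fun s => b.coe_mem_span_coord (LinearMap.proj s : (σ → k) →ₗ[k] k).toAffineMap
  have hmem := MvPolynomial.aeval_mem_pow_of_totalDegree_le h1 hproj hp
  rw [pow_two, span_mul_span, ← image2_mul, image2_range, mem_span_range_iff_exists_fun] at hmem
  obtain ⟨c, hc⟩ := hmem
  refine ⟨Matrix.of fun i j => c (i, j), fun x => ?_⟩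
  have heval : MvPolynomial.aeval (fun s (x : σ → k) => x s) p x = MvPolynomial.eval x p :=
    MvPolynomial.comp_aeval_apply _ (Pi.evalAlgHom k (fun _ => k) x) p
  rw [← heval, ← hc, Finset.sum_apply, Fintype.sum_prod_type]
  simp only [Pi.smul_apply, Pi.mul_apply, smul_eq_mul, dotProduct, mulVec,
    coords_apply, of_apply, Finset.mul_sum]
  exact Finset.sum_congr rfl fun i _ => Finset.sum_congr rfl fun j _ => by ring

theorem coords_smul_add_one_sub_smul [DecidableEq ι] (b : AffineBasis ι k V) (a a' : ι)
    (t : k) : b.coords (t • b a + (1 - t) • b a') = Pi.single a t + Pi.single a' (1 - t) := by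
  have hline : t • b a + (1 - t) • b a' = AffineMap.lineMap (b a') (b a) t := by
    rw [AffineMap.lineMap_apply_module, add_comm]
  funext i
  rw [hline, AffineMap.apply_lineMap, AffineMap.lineMap_apply_module]
  simp only [Pi.add_apply, Pi.smul_apply, coords_apply, coord_apply, eq_comm, smul_eq_mul, mul_ite,
    mul_one, mul_zero, Pi.single_apply]
  ring

end AffineBasis

theorem enriched_unisolvence_of_nonsingular_general
    (v : Fin 3 → (Fin 2 → ℝ)) (lam : Fin 3 → ((Fin 2 → ℝ) →ᵃ[ℝ] ℝ))
    (hv : AffineIndependent ℝ v)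
    (hdelta : ∀ i j, lam i (v j) = if i = j then 1 else 0)
    (F : Fin 3 → (((Fin 2 → ℝ) → ℝ) →ₗ[ℝ] ℝ))
    (N : Matrix (Fin 3) (Fin 3) ℝ)
    (hN : N = Matrix.of fun j i => F j (phiAF lam i))
    (hdet : N.det ≠ 0)
    (p : MvPolynomial (Fin 2) ℝ) (hp : p.totalDegree ≤ 2)
    (hedge : ∀ j : Fin 3,
      (∫ t in (0:ℝ)..1,
        MvPolynomial.eval (t • v (j + 1) + (1 - t) • v (j + 2)) p) = 0)
    (hF : ∀ j : Fin 3, F j (fun x => MvPolynomial.eval x p) = 0) :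
    p = 0 := by
  obtain ⟨b, rfl⟩ : ∃ b : AffineBasis (Fin 3) ℝ (Fin 2 → ℝ), ⇑b = v :=
    ⟨⟨v, hv, hv.affineSpan_eq_top_iff_card_eq_finrank_add_one.mpr (by simp)⟩, rfl⟩
  obtain rfl : lam = b.coord := funext fun i => b.eq_coord_of_apply_eq_ite (hdelta i)
  obtain ⟨c, hc⟩ := b.exists_eval_eq_coords_dotProduct_mulVec hp
  have hcross : ∀ j, c (j + 1) (j + 2) + c (j + 2) (j + 1) =
      -2 * (c (j + 1) (j + 1) + c (j + 2) (j + 2)) := by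
    intro j
    have h := hedge j
    simp only [hc, b.coords_smul_add_one_sub_smul, single_add_single_dotProduct_mulVec,
      intervalIntegral.integral_quadratic_bernstein] at h
    linarith
  have hphi : (fun x => MvPolynomial.eval x p) = ∑ i, c i i • phiAF b.coord i := by
    funext x
    rw [hc, dotProduct_mulVec_eq_sum_diag_mul_phi c hcross (b.coords x)
      (b.sum_coord_apply_eq_one x)]
    simp [phiAF, AffineBasis.coords_apply]
  have hdiag : c.diag = 0 := by
    refine eq_zero_of_mulVec_eq_zero hdet (funext fun j => ?_)
    rw [Pi.zero_apply, ← hF j, hphi, hN]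
    simp [mulVec, dotProduct, mul_comm]
  refine MvPolynomial.funext fun x => ?_
  have hcii : ∀ i, c i i = 0 := congrFun hdiag
  simp [congrFun hphi x, hcii]

theorem enriched_unisolvence_of_nonsingular
    (v : Fin 3 → (Fin 2 → ℝ)) (lam : Fin 3 → ((Fin 2 → ℝ) →ᵃ[ℝ] ℝ))
    (hv : AffineIndependent ℝ v)
    (hdelta : ∀ i j, lam i (v j) = if i = j then 1 else 0)
    (hsum : ∀ x, lam 0 x + lam 1 x + lam 2 x = 1)
    (F : Fin 3 → (((Fin 2 → ℝ) → ℝ) →ₗ[ℝ] ℝ))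
    (N : Matrix (Fin 3) (Fin 3) ℝ)
    (hN : N = Matrix.of fun j i => F j (phiAF lam i))
    (hdet : N.det ≠ 0)
    (p : MvPolynomial (Fin 2) ℝ) (hp : p.totalDegree ≤ 2)
    (hedge : ∀ j : Fin 3,
      (∫ t in (0:ℝ)..1,
        MvPolynomial.eval (t • v (j + 1) + (1 - t) • v (j + 2)) p) = 0)
    (hF : ∀ j : Fin 3, F j (fun x => MvPolynomial.eval x p) = 0) :
    p = 0 :=
  enriched_unisolvence_of_nonsingular_general v lam hv hdelta F N hN hdet p hp hedge hF
end

section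
/- If p is a polynomial of degree ≤ 2 on ℝ² whose averages over all three edges of a nondegenerate triangle vanish, then p = Σₖ p(vₖ) φₖ, where φₖ = λₖ(1 - 3λ_{k+1} - 3λ_{k+2}). -/
/-!
Simpson's rule is exact for quadratics, so the vanishing average of `p` over the edge `Γⱼ` says
`p(v_{j+1}) + 4 p(mⱼ) + p(v_{j+2}) = 0`, where `mⱼ` is the midpoint of `Γⱼ`. Substituting these
relations into the Lagrange interpolation formula for quadratics at the vertices and edge midpoints,
`p = Σₖ p(vₖ) λₖ (2λₖ - 1) + Σⱼ 4 p(mⱼ) λ_{j+1} λ_{j+2}`, and using `λ₁ + λ₂ + λ₃ = 1` eliminates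
the midpoint values and leaves `Σₖ p(vₖ) φₖ`.
-/

open MeasureTheory MvPolynomial Finset

section QuadraticEval

variable {R : Type*} [CommRing R]

theorem add_le_two_of_mem_support {p : MvPolynomial (Fin 2) R} (hp : p.totalDegree ≤ 2)
    {d : Fin 2 →₀ ℕ} (hd : d ∈ p.support) : d 0 + d 1 ≤ 2 := by
  have := (le_totalDegree hd).trans hp
  rwa [Finsupp.sum_fintype _ _ fun _ => rfl, Fin.sum_univ_two] at this

theorem eval_eq_sum_range_three {p : MvPolynomial (Fin 2) R} (hp : p.totalDegree ≤ 2)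
    (x : Fin 2 → R) :
    eval x p = ∑ ab ∈ range 3 ×ˢ range 3,
      coeff (Finsupp.single 0 ab.1 + Finsupp.single 1 ab.2) p * x 0 ^ ab.1 * x 1 ^ ab.2 := by
  set e : ℕ × ℕ → Fin 2 →₀ ℕ := fun ab => Finsupp.single 0 ab.1 + Finsupp.single 1 ab.2
  have he_inj : Set.InjOn e ↑(range 3 ×ˢ range 3) := fun ab _ ab' _ h => by
    have h0 : ab.1 = ab'.1 := by simpa [e] using DFunLike.congr_fun h 0
    have h1 : ab.2 = ab'.2 := by simpa [e] using DFunLike.congr_fun h 1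
    exact Prod.ext h0 h1
  have hsupp : p.support ⊆ (range 3 ×ˢ range 3).image e := fun d hd => by
    have := add_le_two_of_mem_support hp hd
    refine mem_image.2 ⟨(d 0, d 1), by simp only [mem_product, mem_range]; omega, ?_⟩
    ext i; fin_cases i <;> simp [e]
  rw [eval_eq', sum_subset hsupp fun d _ hd => by simp [notMem_support_iff.1 hd],
    sum_image he_inj]
  refine sum_congr rfl fun ab _ => ?_
  simp [e, Fin.prod_univ_two, mul_assoc]

theorem exists_eval_eq_quadratic {p : MvPolynomial (Fin 2) R} (hp : p.totalDegree ≤ 2) :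
    ∃ g₀ g₁ g₂ g₃ g₄ g₅ : R, ∀ x : Fin 2 → R, eval x p =
      g₀ + g₁ * x 0 + g₂ * x 1 + g₃ * x 0 ^ 2 + g₄ * (x 0 * x 1) + g₅ * x 1 ^ 2 := by
  have hcoeff : ∀ a b, 2 < a + b → coeff (Finsupp.single 0 a + Finsupp.single 1 b) p = 0 :=
    fun a b hab => notMem_support_iff.1 fun hd => by
      have : a + b ≤ 2 := by simpa using add_le_two_of_mem_support hp hd
      omega
  set c : ℕ → ℕ → R := fun a b => coeff (Finsupp.single 0 a + Finsupp.single 1 b) p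
  refine ⟨c 0 0, c 1 0, c 0 1, c 2 0, c 1 1, c 0 2, fun x => ?_⟩
  rw [eval_eq_sum_range_three hp, sum_product]
  simp only [sum_range_succ, sum_range_zero, hcoeff 2 1 (by norm_num), hcoeff 1 2 (by norm_num),
    hcoeff 2 2 (by norm_num)]
  ring

theorem exists_eval_affine_eq_quadratic {p : MvPolynomial (Fin 2) R} (hp : p.totalDegree ≤ 2)
    (w u z : Fin 2 → R) :
    ∃ a b c d e f : R, ∀ s t : R, eval (w + s • u + t • z) p =
      a + b * s + c * t + d * s ^ 2 + e * (s * t) + f * t ^ 2 := by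
  obtain ⟨g₀, g₁, g₂, g₃, g₄, g₅, hg⟩ := exists_eval_eq_quadratic hp
  refine ⟨g₀ + g₁ * w 0 + g₂ * w 1 + g₃ * w 0 ^ 2 + g₄ * (w 0 * w 1) + g₅ * w 1 ^ 2,
    g₁ * u 0 + g₂ * u 1 + 2 * g₃ * w 0 * u 0 + g₄ * (w 0 * u 1 + u 0 * w 1) + 2 * g₅ * w 1 * u 1,
    g₁ * z 0 + g₂ * z 1 + 2 * g₃ * w 0 * z 0 + g₄ * (w 0 * z 1 + z 0 * w 1) + 2 * g₅ * w 1 * z 1,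
    g₃ * u 0 ^ 2 + g₄ * (u 0 * u 1) + g₅ * u 1 ^ 2,
    2 * g₃ * u 0 * z 0 + g₄ * (u 0 * z 1 + z 0 * u 1) + 2 * g₅ * u 1 * z 1,
    g₃ * z 0 ^ 2 + g₄ * (z 0 * z 1) + g₅ * z 1 ^ 2, fun s t => ?_⟩
  simp only [hg, Pi.add_apply, Pi.smul_apply, smul_eq_mul]
  ring

end QuadraticEval

theorem integral_eq_simpson_of_quadratic {g : ℝ → ℝ} {a b c : ℝ}
    (hg : ∀ t, g t = a + b * t + c * t ^ 2) :
    ∫ t in (0 : ℝ)..1, g t = (g 0 + 4 * g (1 / 2) + g 1) / 6 := by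
  have hint : ∀ f : ℝ → ℝ, Continuous f → IntervalIntegrable f volume 0 1 :=
    fun f hf => hf.intervalIntegrable 0 1
  simp only [hg]
  rw [intervalIntegral.integral_add (hint _ (by fun_prop)) (hint _ (by fun_prop)),
    intervalIntegral.integral_add (hint _ (by fun_prop)) (hint _ (by fun_prop)),
    intervalIntegral.integral_const_mul, intervalIntegral.integral_const_mul, integral_id,
    integral_pow, intervalIntegral.integral_const]
  norm_num
  ring

theorem integral_eval_segment_eq_simpson {p : MvPolynomial (Fin 2) ℝ} (hp : p.totalDegree ≤ 2)
    (y z : Fin 2 → ℝ) :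
    ∫ t in (0 : ℝ)..1, eval (t • y + (1 - t) • z) p =
      (eval z p + 4 * eval (midpoint ℝ y z) p + eval y p) / 6 := by
  obtain ⟨a, b, _, d, _, _, h⟩ := exists_eval_affine_eq_quadratic hp z (y - z) 0
  have hline : ∀ t : ℝ, eval (t • y + (1 - t) • z) p = a + b * t + d * t ^ 2 := fun t => by
    rw [show t • y + (1 - t) • z = z + t • (y - z) + (0 : ℝ) • 0 by module, h]
    ring
  rw [integral_eq_simpson_of_quadratic hline, midpoint_eq_smul_add]
  norm_num [smul_add]

theorem eval_sum_smul_eq_lagrange {p : MvPolynomial (Fin 2) ℝ} (hp : p.totalDegree ≤ 2)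
    (v : Fin 3 → Fin 2 → ℝ) {μ : Fin 3 → ℝ} (hμ : ∑ k, μ k = 1) :
    eval (∑ k, μ k • v k) p =
      ∑ k, eval (v k) p * (μ k * (2 * μ k - 1)) +
        ∑ k, 4 * eval (midpoint ℝ (v (k + 1)) (v (k + 2))) p * (μ (k + 1) * μ (k + 2)) := by
  obtain ⟨a, b, c, d, e, f, h⟩ := exists_eval_affine_eq_quadratic hp (v 0) (v 1 - v 0) (v 2 - v 0)
  have eval_at : ∀ y s t, y = v 0 + s • (v 1 - v 0) + t • (v 2 - v 0) →
      eval y p = a + b * s + c * t + d * s ^ 2 + e * (s * t) + f * t ^ 2 := by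
    rintro _ s t rfl
    exact h s t
  have hμ₀ : μ 0 = 1 - μ 1 - μ 2 := by rw [Fin.sum_univ_three] at hμ; linarith
  simp only [Fin.sum_univ_three, Fin.reduceAdd, midpoint_eq_smul_add, invOf_eq_inv]
  rw [eval_at _ (μ 1) (μ 2) (by rw [hμ₀]; module), eval_at (v 0) 0 0 (by module),
    eval_at (v 1) 1 0 (by module), eval_at (v 2) 0 1 (by module),
    eval_at _ (1 / 2) (1 / 2) (by module), eval_at _ 0 (1 / 2) (by module),
    eval_at _ (1 / 2) 0 (by module), hμ₀]
  ring

theorem AffineBasis.eq_coord_of_apply {ι k V P : Type*} [Ring k] [AddCommGroup V] [Module k V]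
    [AddTorsor V P] [DecidableEq ι] (b : AffineBasis ι k P) {i : ι} {f : P →ᵃ[k] k}
    (hf : ∀ j, f (b j) = if i = j then 1 else 0) : f = b.coord i :=
  AffineMap.ext_on b.tot <| by
    rintro _ ⟨j, rfl⟩
    rw [hf, b.coord_apply]

theorem lagrange_eq_of_edge_relations {R : Type*} [CommRing R] (P M ℓ : Fin 3 → R)
    (hℓ : ∑ k, ℓ k = 1) (hPM : ∀ j, P (j + 1) + 4 * M j + P (j + 2) = 0) :
    ∑ k, P k * (ℓ k * (2 * ℓ k - 1)) + ∑ k, 4 * M k * (ℓ (k + 1) * ℓ (k + 2)) =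
      ∑ k, P k * (ℓ k * (1 - 3 * ℓ (k + 1) - 3 * ℓ (k + 2))) := by
  have h₀ := hPM 0
  have h₁ := hPM 1
  have h₂ := hPM 2
  simp only [Fin.sum_univ_three, Fin.reduceAdd] at hℓ h₀ h₁ h₂ ⊢
  linear_combination (2 * (P 0 * ℓ 0 + P 1 * ℓ 1 + P 2 * ℓ 2)) * hℓ + ℓ 1 * ℓ 2 * h₀
    + ℓ 2 * ℓ 0 * h₁ + ℓ 0 * ℓ 1 * h₂

theorem vanishing_edge_averages_representation_general
    (v : Fin 3 → (Fin 2 → ℝ)) (lam : Fin 3 → ((Fin 2 → ℝ) →ᵃ[ℝ] ℝ))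
    (hv : AffineIndependent ℝ v)
    (hdelta : ∀ i j, lam i (v j) = if i = j then 1 else 0)
    (p : MvPolynomial (Fin 2) ℝ) (hp : p.totalDegree ≤ 2)
    (hedge : ∀ j : Fin 3,
      (∫ t in (0:ℝ)..1,
        MvPolynomial.eval (t • v (j + 1) + (1 - t) • v (j + 2)) p) = 0) :
    ∀ x : Fin 2 → ℝ, MvPolynomial.eval x p =
      ∑ k : Fin 3, MvPolynomial.eval (v k) p *
        (lam k x * (1 - 3 * lam (k + 1) x - 3 * lam (k + 2) x)) := by
  intro x
  let b : AffineBasis (Fin 3) ℝ (Fin 2 → ℝ) :=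
    ⟨v, hv, hv.affineSpan_eq_top_iff_card_eq_finrank_add_one.2 (by simp)⟩
  have hlam : ∀ k, lam k = b.coord k := fun k => b.eq_coord_of_apply (hdelta k)
  have hsum : ∑ k, lam k x = 1 := by simpa only [hlam] using b.sum_coord_apply_eq_one x
  have hx : x = ∑ k, lam k x • v k := by
    simp only [hlam]
    exact (b.linear_combination_coord_eq_self x).symm
  have hmid : ∀ j, eval (v (j + 1)) p + 4 * eval (midpoint ℝ (v (j + 1)) (v (j + 2))) p
      + eval (v (j + 2)) p = 0 := fun j => by
    linarith [integral_eval_segment_eq_simpson hp (v (j + 1)) (v (j + 2)) ▸ hedge j]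
  conv_lhs => rw [hx]
  rw [eval_sum_smul_eq_lagrange hp v hsum]
  exact lagrange_eq_of_edge_relations _ _ _ hsum hmid

theorem vanishing_edge_averages_representation
    (v : Fin 3 → (Fin 2 → ℝ)) (lam : Fin 3 → ((Fin 2 → ℝ) →ᵃ[ℝ] ℝ))
    (hv : AffineIndependent ℝ v)
    (hdelta : ∀ i j, lam i (v j) = if i = j then 1 else 0)
    (hsum : ∀ x, lam 0 x + lam 1 x + lam 2 x = 1)
    (p : MvPolynomial (Fin 2) ℝ) (hp : p.totalDegree ≤ 2)
    (hedge : ∀ j : Fin 3,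
      (∫ t in (0:ℝ)..1,
        MvPolynomial.eval (t • v (j + 1) + (1 - t) • v (j + 2)) p) = 0) :
    ∀ x : Fin 2 → ℝ, MvPolynomial.eval x p =
      ∑ k : Fin 3, MvPolynomial.eval (v k) p *
        (lam k x * (1 - 3 * lam (k + 1) x - 3 * lam (k + 2) x)) :=
  vanishing_edge_averages_representation_general v lam hv hdelta p hp hedge
end

section
/- For γ > -1, let F_{j,γ}(f) = ∫₀¹ t^γ(1-t)^γ f(t m_{j+1} + (1-t) m_{j+2}) dt, where m₁, m₂, m₃ are the edge midpoints of a nondegenerate triangle (indices mod 3), and let φᵢ = λᵢ(1 - 3λ_{i+1} - 3λ_{i+2}). Then F_{j,γ}(φⱼ) = -σ_γ/4 and F_{j,γ}(φᵢ) = σ_γ · (-(5γ+6)/(8(2γ+3))) for i ≠ j, where σ_γ = B(γ+1, γ+1) is the beta function value. -/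
/-!
On the segment from `m_{j+1}` to `m_{j+2}` the barycentric coordinates are
`(1/2, (1 - t)/2, t/2)`, so every `φᵢ` restricts to a quadratic polynomial in `t`. Its integral
against the weight `t^γ (1 - t)^γ` is then fixed by the first two moments of the weight, which the
recurrence `B(a + 1, b) = a / (a + b) · B(a, b)` expresses through `σ = B(γ + 1, γ + 1)`.
-/

open MeasureTheory

/-- Edge midpoints of the triangle. -/
noncomputable def midpt (v : Fin 3 → (Fin 2 → ℝ)) (j : Fin 3) : Fin 2 → ℝ :=
  (v (j + 1) + v (j + 2)) / 2

section Beta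

open ProbabilityTheory (beta)

variable {a b : ℝ}

lemma ofReal_cpow_mul_one_sub_cpow {x : ℝ} (hx₀ : 0 ≤ x) (hx₁ : x ≤ 1) :
    (x : ℂ) ^ (((a + 1 : ℝ) : ℂ) - 1) * (1 - (x : ℂ)) ^ (((b + 1 : ℝ) : ℂ) - 1)
      = ((x ^ a * (1 - x) ^ b : ℝ) : ℂ) := by
  rw [Complex.ofReal_mul, Complex.ofReal_cpow hx₀, Complex.ofReal_cpow (by linarith)]
  push_cast
  rw [add_sub_cancel_right, add_sub_cancel_right]

lemma intervalIntegrable_rpow_mul_one_sub_rpow (ha : -1 < a) (hb : -1 < b) :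
    IntervalIntegrable (fun t : ℝ => t ^ a * (1 - t) ^ b) volume 0 1 := by
  have hc := Complex.betaIntegral_convergent (u := ((a + 1 : ℝ) : ℂ)) (v := ((b + 1 : ℝ) : ℂ))
    (by simp; linarith) (by simp; linarith)
  rw [intervalIntegrable_iff] at hc ⊢
  refine IntegrableOn.congr_fun hc.re (fun x hx => ?_) measurableSet_uIoc
  rw [Set.uIoc_of_le zero_le_one] at hx
  rw [ofReal_cpow_mul_one_sub_cpow hx.1.le hx.2]
  exact Complex.ofReal_re _

lemma integral_rpow_mul_one_sub_rpow (ha : -1 < a) (hb : -1 < b) :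
    ∫ t in (0 : ℝ)..1, t ^ a * (1 - t) ^ b = beta (a + 1) (b + 1) := by
  have ha' : (0 : ℝ) < a + 1 := by linarith
  have hb' : (0 : ℝ) < b + 1 := by linarith
  have hreal : Complex.betaIntegral ((a + 1 : ℝ) : ℂ) ((b + 1 : ℝ) : ℂ)
      = ((∫ t in (0 : ℝ)..1, t ^ a * (1 - t) ^ b : ℝ) : ℂ) := by
    rw [Complex.betaIntegral, ← intervalIntegral.integral_ofReal]
    refine intervalIntegral.integral_congr fun x hx => ?_
    rw [Set.uIcc_of_le zero_le_one] at hx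
    exact ofReal_cpow_mul_one_sub_cpow hx.1 hx.2
  rw [ProbabilityTheory.beta_eq_betaIntegralReal _ _ ha' hb', hreal, Complex.ofReal_re]

lemma ProbabilityTheory.beta_add_one_left (ha : a ≠ 0) (hab : a + b ≠ 0) :
    beta (a + 1) b = a / (a + b) * beta a b := by
  rw [beta, beta, Real.Gamma_add_one ha, add_right_comm, Real.Gamma_add_one hab,
    div_mul_div_comm, mul_assoc]

lemma integral_rpow_add_one_mul_one_sub_rpow (ha : -1 < a) (hb : -1 < b) :
    ∫ t in (0 : ℝ)..1, t ^ (a + 1) * (1 - t) ^ b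
      = (a + 1) / (a + b + 2) * ∫ t in (0 : ℝ)..1, t ^ a * (1 - t) ^ b := by
  rw [integral_rpow_mul_one_sub_rpow (by linarith) hb, integral_rpow_mul_one_sub_rpow ha hb,
    ProbabilityTheory.beta_add_one_left (by linarith) (by linarith)]
  ring_nf

end Beta

lemma integral_rpow_mul_one_sub_rpow_mul_quadratic {γ : ℝ} (hγ : -1 < γ) (q : ℝ → ℝ)
    (c₀ c₁ c₂ : ℝ) (hq : ∀ t, q t = c₀ + c₁ * t + c₂ * t ^ 2) :
    ∫ t in (0 : ℝ)..1, t ^ γ * (1 - t) ^ γ * q t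
      = (∫ t in (0 : ℝ)..1, t ^ γ * (1 - t) ^ γ)
          * (c₀ + c₁ / 2 + c₂ * (γ + 2) / (2 * (2 * γ + 3))) := by
  have hγ₁ : -1 < γ + 1 := by linarith
  have hsplit : ∀ᵐ t : ℝ, t ∈ Set.uIoc (0 : ℝ) 1 →
      t ^ γ * (1 - t) ^ γ * q t = c₀ * (t ^ γ * (1 - t) ^ γ)
        + c₁ * (t ^ (γ + 1) * (1 - t) ^ γ) + c₂ * (t ^ (γ + 1 + 1) * (1 - t) ^ γ) := by
    refine Filter.Eventually.of_forall fun t ht => ?_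
    rw [Set.uIoc_of_le zero_le_one] at ht
    simp only [hq, Real.rpow_add_one ht.1.ne']
    ring
  have hint : ∀ a : ℝ, -1 < a →
      IntervalIntegrable (fun t : ℝ => t ^ a * (1 - t) ^ γ) volume 0 1 :=
    fun a ha => intervalIntegrable_rpow_mul_one_sub_rpow ha hγ
  rw [intervalIntegral.integral_congr_ae hsplit,
    intervalIntegral.integral_add (((hint _ hγ).const_mul _).add ((hint _ hγ₁).const_mul _))
      ((hint _ (by linarith)).const_mul _),
    intervalIntegral.integral_add ((hint _ hγ).const_mul _) ((hint _ hγ₁).const_mul _)]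
  have hM₁ : ∫ t in (0 : ℝ)..1, t ^ (γ + 1) * (1 - t) ^ γ
      = (∫ t in (0 : ℝ)..1, t ^ γ * (1 - t) ^ γ) / 2 := by
    have : γ + 1 ≠ 0 := by linarith
    rw [integral_rpow_add_one_mul_one_sub_rpow hγ hγ, show γ + γ + 2 = 2 * (γ + 1) by ring]
    field_simp
  have hM₂ : ∫ t in (0 : ℝ)..1, t ^ (γ + 1 + 1) * (1 - t) ^ γ
      = (γ + 2) / (2 * (2 * γ + 3)) * ∫ t in (0 : ℝ)..1, t ^ γ * (1 - t) ^ γ := by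
    have : 2 * γ + 3 ≠ 0 := by linarith
    rw [integral_rpow_add_one_mul_one_sub_rpow hγ₁ hγ, hM₁, show γ + 1 + γ + 2 = 2 * γ + 3 by ring]
    field_simp
    ring
  simp only [intervalIntegral.integral_const_mul]
  rw [hM₂, hM₁]
  ring

section Triangle

variable (v : Fin 3 → (Fin 2 → ℝ))

lemma AffineMap.apply_midpt (f : (Fin 2 → ℝ) →ᵃ[ℝ] ℝ) (k : Fin 3) :
    f (midpt v k) = (f (v (k + 1)) + f (v (k + 2))) / 2 := by
  have : midpt v k = midpoint ℝ (v (k + 1)) (v (k + 2)) := by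
    rw [midpoint_eq_smul_add, midpt]
    ext
    simp [div_eq_inv_mul]
  rw [this, AffineMap.map_midpoint, midpoint_eq_smul_add, smul_eq_mul, invOf_eq_inv,
    inv_mul_eq_div]

lemma AffineMap.apply_segment_midpt (f : (Fin 2 → ℝ) →ᵃ[ℝ] ℝ) (j : Fin 3) (t : ℝ) :
    f (t • midpt v (j + 1) + (1 - t) • midpt v (j + 2))
      = (t * (f (v (j + 2)) + f (v j)) + (1 - t) * (f (v j) + f (v (j + 1)))) / 2 := by
  rw [Convex.combo_affine_apply (add_sub_cancel t 1), f.apply_midpt, f.apply_midpt,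
    show j + 1 + 1 = j + 2 by grind, show j + 1 + 2 = j by grind,
    show j + 2 + 1 = j by grind, show j + 2 + 2 = j + 1 by grind, smul_eq_mul, smul_eq_mul]
  ring

variable {v} {lam : Fin 3 → ((Fin 2 → ℝ) →ᵃ[ℝ] ℝ)}
  (hdelta : ∀ i j, lam i (v j) = if i = j then 1 else 0) (j : Fin 3) (t : ℝ)
include hdelta

lemma barycentric_segment_midpt :
    lam j (t • midpt v (j + 1) + (1 - t) • midpt v (j + 2)) = 1 / 2 ∧
      lam (j + 1) (t • midpt v (j + 1) + (1 - t) • midpt v (j + 2)) = (1 - t) / 2 ∧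
      lam (j + 2) (t • midpt v (j + 1) + (1 - t) • midpt v (j + 2)) = t / 2 := by
  simp only [AffineMap.apply_segment_midpt, hdelta]
  refine ⟨?_, ?_, ?_⟩ <;> split_ifs <;> grind

lemma phiAF_self_segment_midpt :
    phiAF lam j (t • midpt v (j + 1) + (1 - t) • midpt v (j + 2)) = -1 / 4 := by
  obtain ⟨h₀, h₁, h₂⟩ := barycentric_segment_midpt hdelta j t
  rw [phiAF, h₀, h₁, h₂]
  ring

lemma phiAF_add_one_segment_midpt :
    phiAF lam (j + 1) (t • midpt v (j + 1) + (1 - t) • midpt v (j + 2))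
      = -(1 - t) * (1 + 3 * t) / 4 := by
  obtain ⟨h₀, h₁, h₂⟩ := barycentric_segment_midpt hdelta j t
  rw [phiAF, show j + 1 + 1 = j + 2 by grind, show j + 1 + 2 = j by grind, h₀, h₁, h₂]
  ring

lemma phiAF_add_two_segment_midpt :
    phiAF lam (j + 2) (t • midpt v (j + 1) + (1 - t) • midpt v (j + 2))
      = -t * (4 - 3 * t) / 4 := by
  obtain ⟨h₀, h₁, h₂⟩ := barycentric_segment_midpt hdelta j t
  rw [phiAF, show j + 2 + 1 = j by grind, show j + 2 + 2 = j + 1 by grind, h₀, h₁, h₂]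
  ring

end Triangle

theorem first_class_functionals_on_phi_general
    (v : Fin 3 → (Fin 2 → ℝ)) (lam : Fin 3 → ((Fin 2 → ℝ) →ᵃ[ℝ] ℝ))
    (hdelta : ∀ i j, lam i (v j) = if i = j then 1 else 0)
    (γ : ℝ) (hγ : -1 < γ)
    (σ : ℝ) (hσ : σ = ∫ u in (0:ℝ)..1, u ^ γ * (1 - u) ^ γ) :
    ∀ j : Fin 3,
      (∫ t in (0:ℝ)..1, t ^ γ * (1 - t) ^ γ *
          phiAF lam j (t • midpt v (j + 1) + (1 - t) • midpt v (j + 2)))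
        = -σ / 4 ∧
      ∀ i : Fin 3, i ≠ j →
        (∫ t in (0:ℝ)..1, t ^ γ * (1 - t) ^ γ *
            phiAF lam i (t • midpt v (j + 1) + (1 - t) • midpt v (j + 2)))
          = σ * (-(5 * γ + 6) / (8 * (2 * γ + 3))) := by
  intro j
  have h₃ : 2 * γ + 3 ≠ 0 := by linarith
  subst hσ
  refine ⟨?_, fun i hij => ?_⟩
  · refine (integral_rpow_mul_one_sub_rpow_mul_quadratic hγ _ (-1 / 4) 0 0 fun t => ?_).trans
      (by ring)
    rw [phiAF_self_segment_midpt hdelta]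
    ring
  obtain rfl | rfl : i = j + 1 ∨ i = j + 2 := by grind
  · refine (integral_rpow_mul_one_sub_rpow_mul_quadratic hγ _ (-1 / 4) (-1 / 2) (3 / 4)
      fun t => ?_).trans (by field_simp; ring)
    rw [phiAF_add_one_segment_midpt hdelta]
    ring
  · refine (integral_rpow_mul_one_sub_rpow_mul_quadratic hγ _ 0 (-1) (3 / 4)
      fun t => ?_).trans (by field_simp; ring)
    rw [phiAF_add_two_segment_midpt hdelta]
    ring

theorem first_class_functionals_on_phi
    (v : Fin 3 → (Fin 2 → ℝ)) (lam : Fin 3 → ((Fin 2 → ℝ) →ᵃ[ℝ] ℝ))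
    (hv : AffineIndependent ℝ v)
    (hdelta : ∀ i j, lam i (v j) = if i = j then 1 else 0)
    (hsum : ∀ x, lam 0 x + lam 1 x + lam 2 x = 1)
    (γ : ℝ) (hγ : -1 < γ)
    (σ : ℝ) (hσ : σ = ∫ u in (0:ℝ)..1, u ^ γ * (1 - u) ^ γ) :
    ∀ j : Fin 3,
      (∫ t in (0:ℝ)..1, t ^ γ * (1 - t) ^ γ *
          phiAF lam j (t • midpt v (j + 1) + (1 - t) • midpt v (j + 2)))
        = -σ / 4 ∧
      ∀ i : Fin 3, i ≠ j →
        (∫ t in (0:ℝ)..1, t ^ γ * (1 - t) ^ γ *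
            phiAF lam i (t • midpt v (j + 1) + (1 - t) • midpt v (j + 2)))
          = σ * (-(5 * γ + 6) / (8 * (2 * γ + 3))) :=
  first_class_functionals_on_phi_general v lam hdelta γ hγ σ hσ
end
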